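/- arXiv:2104.11679 — 10 statements merged into one kernel-verified Lean document; each statement's English description precedes it below -/
import Mathlib

section
/- Let ρ > 0, h₁ > 0, h₂ > 0 and α₂ ∈ [0,1] with α₁ = 1 − α₂. Then log₂(1 + ρα₁h₁) ≥ ½·log₂(1 + ρh₁) if and only if α₂ ≤ √(1+ρh₁)·(√(1+ρh₁) − 1)/(ρh₁). -/
theorem stmt_3 (ρ h₁ h₂ α₂ : ℝ) (hρ : 0 < ρ) (h1 : 0 < h₁) (h2 : 0 < h₂)
    (hα : α₂ ∈ Set.Icc (0:ℝ) 1) :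
    Real.logb 2 (1 + ρ * (1 - α₂) * h₁) ≥ (1/2) * Real.logb 2 (1 + ρ * h₁) ↔
      α₂ ≤ Real.sqrt (1 + ρ * h₁) * (Real.sqrt (1 + ρ * h₁) - 1) / (ρ * h₁) := by
  obtain ⟨hα0, hα1⟩ := hα
  set x := ρ * h₁ with hx
  have hxpos : 0 < x := by positivity
  set s := Real.sqrt (1 + x) with hs
  have hs2 : s ^ 2 = 1 + x := Real.sq_sqrt (by linarith)
  have hs1 : 1 ≤ s := by nlinarith [Real.sqrt_nonneg (1 + x)]
  have hL : 0 < 1 + ρ * (1 - α₂) * h₁ := by nlinarith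
  have hhalf : (1/2 : ℝ) * Real.logb 2 (1 + x) = Real.logb 2 s := by
    rw [← hs2, Real.logb_pow]
    push_cast; ring
  rw [ge_iff_le, hhalf, Real.logb_le_logb one_lt_two (by linarith) hL]
  constructor
  · intro h
    rw [le_div_iff₀ hxpos]
    nlinarith
  · intro h
    rw [le_div_iff₀ hxpos] at h
    nlinarith
end

section
/- Let ρ > 0, h₁ > 0, h₂ > 0 and α₂ ∈ [0,1] with α₁ = 1 − α₂. Then log₂(1 + ρα₂h₂/(1 + ρα₁h₁)) ≥ ½·log₂(1 + ρh₂) if and only if α₂ ≥ (1+ρh₁)(√(1+ρh₂) − 1)/(ρh₂ + ρh₁(√(1+ρh₂) − 1)). -/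
/-!
Write `s = √(1 + ρ h₂)`, so that the OMA rate is `log₂ s` and, `log₂` being monotone, the NOMA rate
dominates it iff the SINR-type ratio `1 + ρ α₂ h₂ / D` with `D = 1 + ρ α₁ h₁ > 0` is at least `s`.
Clearing `D` gives `(s - 1) D ≤ ρ α₂ h₂`, which is affine in `α₂`; solving for `α₂` yields the threshold,
whose denominator `ρ h₂ + ρ h₁ (s - 1)` is positive because `s ≥ 1`.
-/

open Real

theorem Real.logb_sqrt (b : ℝ) {x : ℝ} (hx : 0 ≤ x) : logb b √x = logb b x / 2 := by
  rw [logb, log_sqrt hx, logb, div_right_comm]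

theorem le_one_add_div_iff {s a d : ℝ} (hd : 0 < d) : s ≤ 1 + a / d ↔ (s - 1) * d ≤ a := by
  rw [← sub_le_iff_le_add', le_div_iff₀ hd]

theorem le_one_add_noma_sinr_iff {ρ h₁ h₂ α₂ s : ℝ} (hρ : 0 < ρ) (h1 : 0 ≤ h₁) (h2 : 0 < h₂)
    (hα₂ : α₂ ≤ 1) (hs : 1 ≤ s) :
    s ≤ 1 + ρ * α₂ * h₂ / (1 + ρ * (1 - α₂) * h₁) ↔
      (1 + ρ * h₁) * (s - 1) / (ρ * h₂ + ρ * h₁ * (s - 1)) ≤ α₂ := by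
  have hD : 0 < 1 + ρ * (1 - α₂) * h₁ := by positivity
  have hden : 0 < ρ * h₂ + ρ * h₁ * (s - 1) := by positivity
  have affine : (s - 1) * (1 + ρ * (1 - α₂) * h₁) - ρ * α₂ * h₂ =
      (1 + ρ * h₁) * (s - 1) - α₂ * (ρ * h₂ + ρ * h₁ * (s - 1)) := by
    ring
  rw [le_one_add_div_iff hD, div_le_iff₀ hden]
  constructor <;> intro h <;> linarith

theorem stmt_4 (ρ h₁ h₂ α₂ : ℝ) (hρ : 0 < ρ) (h1 : 0 < h₁) (h2 : 0 < h₂)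
    (hα : α₂ ∈ Set.Icc (0:ℝ) 1) :
    Real.logb 2 (1 + ρ * α₂ * h₂ / (1 + ρ * (1 - α₂) * h₁)) ≥
        (1/2) * Real.logb 2 (1 + ρ * h₂) ↔
      α₂ ≥ (1 + ρ * h₁) * (Real.sqrt (1 + ρ * h₂) - 1) /
        (ρ * h₂ + ρ * h₁ * (Real.sqrt (1 + ρ * h₂) - 1)) := by
  obtain ⟨hα0, hα1⟩ := hα
  have hSNR : 1 ≤ 1 + ρ * h₂ := le_add_of_nonneg_right (by positivity)
  have hs : 1 ≤ √(1 + ρ * h₂) := one_le_sqrt.mpr hSNR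
  have hrate : 0 < 1 + ρ * α₂ * h₂ / (1 + ρ * (1 - α₂) * h₁) := by positivity
  rw [ge_iff_le, one_div_mul_eq_div, ← logb_sqrt 2 (by linarith),
    logb_le_logb one_lt_two (by linarith) hrate]
  exact le_one_add_noma_sinr_iff hρ h1.le h2 hα1 hs
end

section
/- Let ρ > 0 and 0 < h₁ < h₂, and set α₂ = √(1+ρh₁)·(√(1+ρh₁) − 1)/(ρh₁), α₁ = 1 − α₂. Then the NOMA sum rate log₂(1 + ρα₁h₁ + ρα₂h₂) is strictly greater than the OMA sum rate ½·log₂(1+ρh₁) + ½·log₂(1+ρh₂). -/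
theorem stmt_6 (ρ h₁ h₂ : ℝ) (hρ : 0 < ρ) (h1 : 0 < h₁) (h12 : h₁ < h₂) :
    Real.logb 2 (1 + ρ * (1 - Real.sqrt (1 + ρ * h₁) * (Real.sqrt (1 + ρ * h₁) - 1) / (ρ * h₁)) * h₁
        + ρ * (Real.sqrt (1 + ρ * h₁) * (Real.sqrt (1 + ρ * h₁) - 1) / (ρ * h₁)) * h₂) >
      (1/2) * Real.logb 2 (1 + ρ * h₁) + (1/2) * Real.logb 2 (1 + ρ * h₂) := by
  set s := Real.sqrt (1 + ρ * h₁) with hs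
  set t := Real.sqrt (1 + ρ * h₂) with ht
  have ha : (1:ℝ) < 1 + ρ * h₁ := by nlinarith
  have hb : (1 + ρ * h₁ : ℝ) < 1 + ρ * h₂ := by nlinarith
  have hs1 : 1 < s := by
    rw [hs]; exact (Real.lt_sqrt (by positivity)).mpr (by nlinarith)
  have hst : s < t := by
    rw [hs, ht]; exact Real.sqrt_lt_sqrt (by nlinarith) hb
  have hs2 : s ^ 2 = 1 + ρ * h₁ := Real.sq_sqrt (by positivity)
  have ht2 : t ^ 2 = 1 + ρ * h₂ := Real.sq_sqrt (by nlinarith)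
  have hrh : ρ * h₁ = s ^ 2 - 1 := by linarith
  have hrh2 : ρ * h₂ = t ^ 2 - 1 := by linarith
  have hspos : (0:ℝ) < s + 1 := by linarith
  have harg : 1 + ρ * (1 - s * (s - 1) / (ρ * h₁)) * h₁ + ρ * (s * (s - 1) / (ρ * h₁)) * h₂
      = s * (s + t ^ 2) / (s + 1) := by
    have hρh : ρ * h₁ ≠ 0 := by positivity
    have e0 : s * (s - 1) / (ρ * h₁) = s / (s + 1) := by
      rw [hrh, show s ^ 2 - 1 = (s - 1) * (s + 1) by ring]
      rw [div_eq_div_iff (by nlinarith) (ne_of_gt hspos)]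
      ring
    rw [e0]
    field_simp
    linear_combination hrh + s * hrh2
  rw [harg]
  have hrhs : (1/2) * Real.logb 2 (1 + ρ * h₁) + (1/2) * Real.logb 2 (1 + ρ * h₂)
      = Real.logb 2 (s * t) := by
    rw [← hs2, ← ht2, show s ^ 2 = s * s by ring, show t ^ 2 = t * t by ring,
      Real.logb_mul (by linarith) (by nlinarith), Real.logb_mul (by nlinarith) (by nlinarith),
      Real.logb_mul (by linarith) (by nlinarith)]
    ring
  rw [hrhs]
  apply Real.logb_lt_logb one_lt_two
  · exact mul_pos (by linarith) (by linarith)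
  · rw [lt_div_iff₀ hspos]
    nlinarith [mul_pos (mul_pos (show (0:ℝ) < s by linarith) (show (0:ℝ) < t - 1 by linarith)) (show (0:ℝ) < t - s by linarith)]
end

section
/- Let ρ > 0 and 0 < h₁ < h₂. Define β₁ = √(1+ρh₁)·(√(1+ρh₁) − 1)/(ρh₁) and β₂ = √(1+ρh₂)·(√(1+ρh₂) − 1)/(ρh₂). Then β₁ ≤ β₂. -/
open Real Set

/- With `s = √(1 + x)` one has `x = (s - 1)(s + 1)`, so the factor `s - 1` cancels and the
quotient is `1 - 1 / (s + 1)`, which increases with `x`. -/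

lemma sqrt_one_add_mul_sqrt_one_add_sub_one_div {x : ℝ} (hx : -1 ≤ x) (hx0 : x ≠ 0) :
    √(1 + x) * (√(1 + x) - 1) / x = 1 - 1 / (√(1 + x) + 1) := by
  set s := √(1 + x)
  have hs_add : s + 1 ≠ 0 := by positivity
  have hx_eq : x = (s - 1) * (s + 1) := by
    linear_combination -sq_sqrt (by linarith : (0 : ℝ) ≤ 1 + x)
  have hs_sub : s - 1 ≠ 0 := fun h => hx0 (by rw [hx_eq, h, zero_mul])
  rw [hx_eq]
  field_simp
  ring

lemma monotoneOn_sqrt_one_add_mul_sqrt_one_add_sub_one_div :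
    MonotoneOn (fun x : ℝ => √(1 + x) * (√(1 + x) - 1) / x) (Ici (-1) \ {0}) := by
  rintro x ⟨hx, hx0⟩ y ⟨hy, hy0⟩ hxy
  simp only [sqrt_one_add_mul_sqrt_one_add_sub_one_div hx hx0,
    sqrt_one_add_mul_sqrt_one_add_sub_one_div hy hy0]
  have hsqrt : √(1 + x) ≤ √(1 + y) := sqrt_le_sqrt (by linarith)
  gcongr

theorem stmt_7 (ρ h₁ h₂ : ℝ) (hρ : 0 < ρ) (h1 : 0 < h₁) (h12 : h₁ < h₂) :
    Real.sqrt (1 + ρ * h₁) * (Real.sqrt (1 + ρ * h₁) - 1) / (ρ * h₁) ≤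
      Real.sqrt (1 + ρ * h₂) * (Real.sqrt (1 + ρ * h₂) - 1) / (ρ * h₂) := by
  have hx₁ : 0 < ρ * h₁ := mul_pos hρ h1
  have hx₁₂ : ρ * h₁ ≤ ρ * h₂ := mul_le_mul_of_nonneg_left h12.le hρ.le
  have mem {x : ℝ} (hx : 0 < x) : x ∈ Ici (-1) \ {0} := ⟨by simp only [mem_Ici]; linarith, hx.ne'⟩
  exact monotoneOn_sqrt_one_add_mul_sqrt_one_add_sub_one_div (mem hx₁) (mem (hx₁.trans_le hx₁₂)) hx₁₂
end

section
/- Let ρ > 0 and 0 < h₁ < h₂ ≤ h₃ < h₄. Define βᵢ = √(1+ρhᵢ)·(√(1+ρhᵢ) − 1)/(ρhᵢ) for i = 1,2. Then (1 + ρβ₁(h₄ − h₃)/(√(1+ρh₁) + ρβ₁h₃)) ≥ (1 + ρβ₂(h₄ − h₃)/(√(1+ρh₂) + ρβ₂h₃)); equivalently, the sum rate of the pairing {(U₁,U₄),(U₂,U₃)} is at least that of {(U₁,U₃),(U₂,U₄)}. -/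
theorem stmt_8 (ρ h₁ h₂ h₃ h₄ : ℝ) (hρ : 0 < ρ) (h1 : 0 < h₁) (h12 : h₁ < h₂)
    (h23 : h₂ ≤ h₃) (h34 : h₃ < h₄) :
    1 + ρ * (Real.sqrt (1 + ρ * h₁) * (Real.sqrt (1 + ρ * h₁) - 1) / (ρ * h₁)) * (h₄ - h₃) /
        (Real.sqrt (1 + ρ * h₁) +
          ρ * (Real.sqrt (1 + ρ * h₁) * (Real.sqrt (1 + ρ * h₁) - 1) / (ρ * h₁)) * h₃) ≥
      1 + ρ * (Real.sqrt (1 + ρ * h₂) * (Real.sqrt (1 + ρ * h₂) - 1) / (ρ * h₂)) * (h₄ - h₃) /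
        (Real.sqrt (1 + ρ * h₂) +
          ρ * (Real.sqrt (1 + ρ * h₂) * (Real.sqrt (1 + ρ * h₂) - 1) / (ρ * h₂)) * h₃) := by
  have h2 : (0:ℝ) < h₂ := h1.trans h12
  have h3 : (0:ℝ) < h₃ := h2.trans_le h23
  set s₁ := Real.sqrt (1 + ρ * h₁) with hs₁def
  set s₂ := Real.sqrt (1 + ρ * h₂) with hs₂def
  have hp1 : (0:ℝ) ≤ 1 + ρ * h₁ := by positivity
  have hp2 : (0:ℝ) ≤ 1 + ρ * h₂ := by positivity
  have hs1sq : s₁ ^ 2 = 1 + ρ * h₁ := Real.sq_sqrt hp1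
  have hs2sq : s₂ ^ 2 = 1 + ρ * h₂ := Real.sq_sqrt hp2
  have hs1gt : 1 < s₁ := by
    have : Real.sqrt 1 < s₁ := Real.sqrt_lt_sqrt (by norm_num) (by nlinarith)
    simpa using this
  have hs2gt : 1 < s₂ := by
    have : Real.sqrt 1 < s₂ := Real.sqrt_lt_sqrt (by norm_num) (by nlinarith)
    simpa using this
  have hs12 : s₁ < s₂ := by
    apply Real.sqrt_lt_sqrt hp1; nlinarith
  -- rewrite each fraction
  have key : ∀ s h : ℝ, 0 < h → 1 < s →
      ρ * (s * (s - 1) / (ρ * h)) * (h₄ - h₃) / (s + ρ * (s * (s - 1) / (ρ * h)) * h₃)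
        = (s - 1) * (h₄ - h₃) / (h + (s - 1) * h₃) := by
    intro s h hh hs
    have hs0 : (0:ℝ) < s := by linarith
    have hden : (0:ℝ) < h + (s - 1) * h₃ := by nlinarith
    rw [div_eq_div_iff]
    · field_simp
    · have : s + ρ * (s * (s - 1) / (ρ * h)) * h₃ = s * (h + (s - 1) * h₃) / h := by
        field_simp
      rw [this]; exact (by positivity : (0:ℝ) < s * (h + (s - 1) * h₃) / h).ne'
    · exact hden.ne'
  rw [key s₁ h₁ h1 hs1gt, key s₂ h₂ h2 hs2gt]
  have hd1 : (0:ℝ) < h₁ + (s₁ - 1) * h₃ := by nlinarith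
  have hd2 : (0:ℝ) < h₂ + (s₂ - 1) * h₃ := by nlinarith
  have hA : (s₂ - 1) * h₁ * ((s₁ + 1) * (s₂ + 1)) = ρ * h₁ * h₂ * (s₁ + 1) := by
    linear_combination h₁ * (s₁ + 1) * hs2sq
  have hB : (s₁ - 1) * h₂ * ((s₁ + 1) * (s₂ + 1)) = ρ * h₁ * h₂ * (s₂ + 1) := by
    linear_combination h₂ * (s₂ + 1) * hs1sq
  have hpos : (0:ℝ) < (s₁ + 1) * (s₂ + 1) := by nlinarith
  have hcross : (s₂ - 1) * h₁ ≤ (s₁ - 1) * h₂ := by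
    nlinarith [hA, hB, hpos, mul_lt_mul_of_pos_left hs12 (show (0:ℝ) < ρ * h₁ * h₂ by positivity)]
  have : (s₂ - 1) * (h₄ - h₃) / (h₂ + (s₂ - 1) * h₃) ≤
      (s₁ - 1) * (h₄ - h₃) / (h₁ + (s₁ - 1) * h₃) := by
    rw [div_le_div_iff₀ hd2 hd1]
    nlinarith [mul_nonneg (sub_nonneg.2 hcross) (le_of_lt (sub_pos.2 h34))]
  linarith
end

section
/- Let ρ > 0 and 0 < h₁ < h₂ < h₃ < h₄. Define F(ρ) = [(1 + (h₃/h₁)(√(1+ρh₁) − 1))/(1 + (h₂/h₁)(√(1+ρh₁) − 1))] · [√(1+ρh₂)·(1 + (h₄/h₂)(√(1+ρh₂) − 1))]/[√(1+ρh₃)·(1 + (h₄/h₃)(√(1+ρh₃) − 1))]. Then F(ρ) ≥ 1 for all ρ > 0. -/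
/-- Key rewriting lemma: 1 + (hj/hi)(√(1+ρhi) − 1) = (sᵢ + sⱼ²)/(sᵢ+1). -/
lemma noma_rw (ρ hi hj : ℝ) (hρ : 0 < ρ) (hhi : 0 < hi) :
    1 + (hj / hi) * (Real.sqrt (1 + ρ * hi) - 1) =
      (Real.sqrt (1 + ρ * hi) + (1 + ρ * hj)) / (Real.sqrt (1 + ρ * hi) + 1) := by
  set s := Real.sqrt (1 + ρ * hi) with hs
  have hs1 : 1 ≤ s := by
    rw [hs]
    nlinarith [Real.sq_sqrt (by nlinarith : (0:ℝ) ≤ 1 + ρ * hi),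
      Real.sqrt_nonneg (1 + ρ * hi), sq_nonneg (Real.sqrt (1 + ρ * hi) - 1)]
  have hsq : s ^ 2 = 1 + ρ * hi := Real.sq_sqrt (by nlinarith)
  have hsp : (0:ℝ) < s + 1 := by linarith
  have key : s - 1 = ρ * hi / (s + 1) := by
    rw [eq_div_iff (ne_of_gt hsp)]; nlinarith
  rw [key]
  field_simp
  ring

lemma key_poly (a b c d : ℝ) (ha : 1 < a) (hab : a < b) (hbc : b < c) (hcd : c < d) :
    c * (b + 1) * (c + d ^ 2) * (a + b ^ 2) ≤ b * (c + 1) * (b + d ^ 2) * (a + c ^ 2) := by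
  have h1 : 0 ≤ (c - b) * (b * c * (b + c + 1) - a) * (d ^ 2 - c ^ 2) := by
    have hbc1 : a < b * c := by nlinarith
    apply mul_nonneg (mul_nonneg (by linarith) (by nlinarith)) (by nlinarith)
  have h2 : 0 ≤ (c + 1) * (c ^ 2 - b ^ 2) * (b * c ^ 2 - a) := by
    apply mul_nonneg (mul_nonneg (by linarith) (by nlinarith)) (by nlinarith)
  nlinarith [h1, h2]

set_option maxHeartbeats 1000000 in
theorem stmt_9 (ρ h₁ h₂ h₃ h₄ : ℝ) (hρ : 0 < ρ) (h1 : 0 < h₁) (h12 : h₁ < h₂)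
    (h23 : h₂ < h₃) (h34 : h₃ < h₄) :
    ((1 + (h₃ / h₁) * (Real.sqrt (1 + ρ * h₁) - 1)) /
        (1 + (h₂ / h₁) * (Real.sqrt (1 + ρ * h₁) - 1))) *
      (Real.sqrt (1 + ρ * h₂) * (1 + (h₄ / h₂) * (Real.sqrt (1 + ρ * h₂) - 1)) /
        (Real.sqrt (1 + ρ * h₃) * (1 + (h₄ / h₃) * (Real.sqrt (1 + ρ * h₃) - 1)))) ≥ 1 := by
  have h2 : 0 < h₂ := by linarith
  have h3 : 0 < h₃ := by linarith
  have h4 : 0 < h₄ := by linarith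
  set a := Real.sqrt (1 + ρ * h₁) with hadef
  set b := Real.sqrt (1 + ρ * h₂) with hbdef
  set c := Real.sqrt (1 + ρ * h₃) with hcdef
  set d := Real.sqrt (1 + ρ * h₄) with hddef
  have ha2 : a ^ 2 = 1 + ρ * h₁ := Real.sq_sqrt (by nlinarith)
  have hb2 : b ^ 2 = 1 + ρ * h₂ := Real.sq_sqrt (by nlinarith)
  have hc2 : c ^ 2 = 1 + ρ * h₃ := Real.sq_sqrt (by nlinarith)
  have hd2 : d ^ 2 = 1 + ρ * h₄ := Real.sq_sqrt (by nlinarith)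
  have ha0 : 0 ≤ a := Real.sqrt_nonneg _
  have ha1 : 1 < a := by nlinarith
  have hab : a < b := Real.sqrt_lt_sqrt (by nlinarith) (by nlinarith)
  have hbc : b < c := Real.sqrt_lt_sqrt (by nlinarith) (by nlinarith)
  have hcd : c < d := Real.sqrt_lt_sqrt (by nlinarith) (by nlinarith)
  clear_value a b c d
  have e13 : 1 + (h₃ / h₁) * (a - 1) = (a + (1 + ρ * h₃)) / (a + 1) := by rw [hadef]; exact noma_rw ρ h₁ h₃ hρ h1
  have e12 : 1 + (h₂ / h₁) * (a - 1) = (a + (1 + ρ * h₂)) / (a + 1) := by rw [hadef]; exact noma_rw ρ h₁ h₂ hρ h1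
  have e24 : 1 + (h₄ / h₂) * (b - 1) = (b + (1 + ρ * h₄)) / (b + 1) := by rw [hbdef]; exact noma_rw ρ h₂ h₄ hρ h2
  have e34 : 1 + (h₄ / h₃) * (c - 1) = (c + (1 + ρ * h₄)) / (c + 1) := by rw [hcdef]; exact noma_rw ρ h₃ h₄ hρ h3
  rw [e13, e12, e24, e34, ← hb2, ← hc2, ← hd2]
  have hap : (0:ℝ) < a + 1 := by linarith
  have hbp : (0:ℝ) < b + 1 := by linarith
  have hcp : (0:ℝ) < c + 1 := by linarith
  have hb0 : (0:ℝ) < b := by linarith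
  have hc0 : (0:ℝ) < c := by linarith
  have hab2 : (0:ℝ) < a + b ^ 2 := by nlinarith
  have hac2 : (0:ℝ) < a + c ^ 2 := by nlinarith
  have hbd2 : (0:ℝ) < b + d ^ 2 := by nlinarith
  have hcd2 : (0:ℝ) < c + d ^ 2 := by nlinarith
  have hD : (0:ℝ) < c * (b + 1) * (c + d ^ 2) * (a + b ^ 2) := by positivity
  have hEq : (a + c ^ 2) / (a + 1) / ((a + b ^ 2) / (a + 1)) *
      (b * ((b + d ^ 2) / (b + 1)) / (c * ((c + d ^ 2) / (c + 1)))) =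
      b * (c + 1) * (b + d ^ 2) * (a + c ^ 2) /
        (c * (b + 1) * (c + d ^ 2) * (a + b ^ 2)) := by
    field_simp
  rw [ge_iff_le, hEq, le_div_iff₀ hD, one_mul]
  exact key_poly a b c d ha1 hab hbc hcd
end

section
/- Let ρ > 0, h₁ > 0 and M ≥ 2 an integer. Define recursively α₁⁽²⁾ = (√(1+ρh₁) − 1)/(ρh₁) and, for M ≥ 3, α_M⁽ᴹ⁾ = (1 + ρα₁⁽ᴹ⁻¹⁾h₁ − (1+ρh₁)^{1/M})/(ρα₁⁽ᴹ⁻¹⁾h₁) and α₁⁽ᴹ⁾ = (1 − α_M⁽ᴹ⁾)·α₁⁽ᴹ⁻¹⁾. Then α₁⁽ᴹ⁾ = ((1+ρh₁)^{1/M} − 1)/(ρh₁) for all M ≥ 2. -/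
theorem stmt_11 (ρ h₁ : ℝ) (hρ : 0 < ρ) (h1 : 0 < h₁) (α : ℕ → ℝ)
    (h2 : α 2 = (Real.sqrt (1 + ρ * h₁) - 1) / (ρ * h₁))
    (hrec : ∀ M : ℕ, 3 ≤ M →
      α M = (1 - (1 + ρ * α (M - 1) * h₁ - (1 + ρ * h₁) ^ ((M : ℝ)⁻¹)) /
        (ρ * α (M - 1) * h₁)) * α (M - 1)) :
    ∀ M : ℕ, 2 ≤ M → α M = ((1 + ρ * h₁) ^ ((M : ℝ)⁻¹) - 1) / (ρ * h₁) := by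
  have hx : (0:ℝ) < ρ * h₁ := mul_pos hρ h1
  have h1x : (1:ℝ) < 1 + ρ * h₁ := by linarith
  intro M hM
  induction M with
  | zero => omega
  | succ n ih =>
    rcases Nat.lt_or_ge n 2 with hn | hn
    · interval_cases n
      · omega
      · rw [h2, Real.sqrt_eq_rpow]
        norm_num
    · -- n+1 ≥ 3
      have hα : α n = ((1 + ρ * h₁) ^ ((n : ℝ)⁻¹) - 1) / (ρ * h₁) := ih hn
      have h3 : 3 ≤ n + 1 := by omega
      have hrec' := hrec (n + 1) h3
      simp only [Nat.add_sub_cancel] at hrec'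
      set s := (1 + ρ * h₁) ^ ((n : ℝ)⁻¹) with hs
      have hs1 : 1 < s := by
        have hn0 : 0 < ((n:ℝ))⁻¹ := by
          have : 0 < (n:ℝ) := by exact_mod_cast (by omega : 0 < n)
          positivity
        exact (Real.one_lt_rpow_iff_of_pos (by linarith)).2 (Or.inl ⟨h1x, hn0⟩)
      have hprod : ρ * α n * h₁ = s - 1 := by
        rw [hα]; field_simp
      rw [hrec', hprod, hα]
      have hsne : s - 1 ≠ 0 := by linarith
      field_simp
      ring
end

section
/- Let ρ > 0, h₁ > 0, M ≥ 3, and set a = ((1+ρh₁)^{1/(M−1)} − 1)/(ρh₁). Then γ = (1 + ρa·h₁ − (1+ρh₁)^{1/M})/(ρa·h₁) satisfies 0 < γ < 1. -/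
theorem stmt_13 (ρ h₁ : ℝ) (hρ : 0 < ρ) (h1 : 0 < h₁) (M : ℕ) (hM : 3 ≤ M) :
    0 < (1 + ρ * (((1 + ρ * h₁) ^ (((M : ℝ) - 1)⁻¹) - 1) / (ρ * h₁)) * h₁ -
          (1 + ρ * h₁) ^ ((M : ℝ)⁻¹)) /
        (ρ * (((1 + ρ * h₁) ^ (((M : ℝ) - 1)⁻¹) - 1) / (ρ * h₁)) * h₁) ∧
      (1 + ρ * (((1 + ρ * h₁) ^ (((M : ℝ) - 1)⁻¹) - 1) / (ρ * h₁)) * h₁ -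
          (1 + ρ * h₁) ^ ((M : ℝ)⁻¹)) /
        (ρ * (((1 + ρ * h₁) ^ (((M : ℝ) - 1)⁻¹) - 1) / (ρ * h₁)) * h₁) < 1 := by
  have hrh : 0 < ρ * h₁ := mul_pos hρ h1
  set x : ℝ := 1 + ρ * h₁ with hx
  have hx1 : 1 < x := by simp [hx]; linarith
  have hM3 : (3 : ℝ) ≤ (M : ℝ) := by exact_mod_cast hM
  have hMpos : (0 : ℝ) < (M : ℝ) := by linarith
  have hM1pos : (0 : ℝ) < (M : ℝ) - 1 := by linarith
  have hexp : ((M : ℝ))⁻¹ < ((M : ℝ) - 1)⁻¹ := by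
    apply inv_strictAnti₀ hM1pos; linarith
  have hlt : x ^ ((M : ℝ)⁻¹) < x ^ (((M : ℝ) - 1)⁻¹) :=
    Real.rpow_lt_rpow_left_iff hx1 |>.2 hexp
  have h1lt : 1 < x ^ ((M : ℝ)⁻¹) := by
    exact Real.one_lt_rpow hx1 (by positivity)
  have hsimp : ρ * ((x ^ (((M : ℝ) - 1)⁻¹) - 1) / (ρ * h₁)) * h₁
      = x ^ (((M : ℝ) - 1)⁻¹) - 1 := by
    field_simp
  rw [hsimp]
  have hdpos : 0 < x ^ (((M : ℝ) - 1)⁻¹) - 1 := by linarith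
  constructor
  · apply div_pos _ hdpos
    linarith
  · rw [div_lt_one hdpos]
    linarith
end

section
/- Let ρ > 0 and h₁, h₂ > 0. Then the lower bound L = (1+ρh₁)(√(1+ρh₂) − 1)/(ρh₂ + ρh₁(√(1+ρh₂) − 1)) and the upper bound U = √(1+ρh₁)·(√(1+ρh₁) − 1)/(ρh₁) satisfy L ≤ U whenever h₁ ≤ h₂, i.e., the feasible set of the power allocation problem is nonempty. -/
/-!
With `x = ρ h₁`, `y = ρ h₂`, `a = √(1 + x)` and `b = √(1 + y)`, the factor `b - 1` cancels from `L`
and `a - 1` from `U`, leaving `L = a² / (a² + b)` and `U = a / (a + 1)`. Cross-multiplying,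
`L ≤ U` becomes `a ≤ b`, i.e. `h₁ ≤ h₂`.
-/

open Real

lemma sq_div_sq_add_le_div_add_one {a b : ℝ} (ha : 0 < a) (hab : a ≤ b) :
    a ^ 2 / (a ^ 2 + b) ≤ a / (a + 1) := by
  rw [div_le_div_iff₀ (add_pos (by positivity) (ha.trans_le hab)) (by positivity)]
  nlinarith [mul_le_mul_of_nonneg_left hab (sq_nonneg a)]

lemma lowerBound_eq {x y : ℝ} (hx : -1 ≤ x) (hy : 0 < y) :
    (1 + x) * (√(1 + y) - 1) / (y + x * (√(1 + y) - 1)) = (1 + x) / (1 + x + √(1 + y)) := by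
  have hb2 : √(1 + y) ^ 2 = 1 + y := sq_sqrt (by linarith)
  have hb : 1 < √(1 + y) := by rw [lt_sqrt zero_le_one]; linarith
  rw [div_eq_div_iff (by nlinarith) (by linarith)]
  linear_combination (1 + x) * hb2

lemma upperBound_eq {x : ℝ} (hx : -1 ≤ x) (hx0 : x ≠ 0) :
    √(1 + x) * (√(1 + x) - 1) / x = √(1 + x) / (√(1 + x) + 1) := by
  rw [div_eq_div_iff hx0 (by positivity)]
  linear_combination √(1 + x) * sq_sqrt (by linarith : (0 : ℝ) ≤ 1 + x)

lemma lowerBound_le_upperBound {x y : ℝ} (hx : 0 < x) (hxy : x ≤ y) :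
    (1 + x) * (√(1 + y) - 1) / (y + x * (√(1 + y) - 1)) ≤ √(1 + x) * (√(1 + x) - 1) / x := by
  rw [lowerBound_eq (by linarith) (by linarith), upperBound_eq (by linarith) hx.ne',
    ← sq_sqrt (by linarith : (0 : ℝ) ≤ 1 + x), sqrt_sq (sqrt_nonneg _)]
  exact sq_div_sq_add_le_div_add_one (sqrt_pos.2 (by linarith)) (sqrt_le_sqrt (by linarith))

theorem stmt_16_general (ρ h₁ h₂ : ℝ) (hρ : 0 < ρ) (h1 : 0 < h₁) (h12 : h₁ ≤ h₂) :
    (1 + ρ * h₁) * (Real.sqrt (1 + ρ * h₂) - 1) /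
        (ρ * h₂ + ρ * h₁ * (Real.sqrt (1 + ρ * h₂) - 1)) ≤
      Real.sqrt (1 + ρ * h₁) * (Real.sqrt (1 + ρ * h₁) - 1) / (ρ * h₁) :=
  lowerBound_le_upperBound (mul_pos hρ h1) (mul_le_mul_of_nonneg_left h12 hρ.le)

theorem stmt_16 (ρ h₁ h₂ : ℝ) (hρ : 0 < ρ) (h1 : 0 < h₁) (h2 : 0 < h₂) (h12 : h₁ ≤ h₂) :
    (1 + ρ * h₁) * (Real.sqrt (1 + ρ * h₂) - 1) /
        (ρ * h₂ + ρ * h₁ * (Real.sqrt (1 + ρ * h₂) - 1)) ≤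
      Real.sqrt (1 + ρ * h₁) * (Real.sqrt (1 + ρ * h₁) - 1) / (ρ * h₁) :=
  stmt_16_general ρ h₁ h₂ hρ h1 h12
end

section
/- Let ρ > 0 and 0 < h₁ < h₂, with α₂ = √(1+ρh₁)·(√(1+ρh₁) − 1)/(ρh₁) and α₁ = 1 − α₂. Then the strong user's NOMA rate strictly exceeds its OMA rate: log₂(1 + ρα₂h₂/(1 + ρα₁h₁)) > ½·log₂(1 + ρh₂). -/
theorem stmt_17 (ρ h₁ h₂ : ℝ) (hρ : 0 < ρ) (h1 : 0 < h₁) (h12 : h₁ < h₂) :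
    Real.logb 2 (1 + ρ * (Real.sqrt (1 + ρ * h₁) * (Real.sqrt (1 + ρ * h₁) - 1) / (ρ * h₁)) * h₂ /
        (1 + ρ * (1 - Real.sqrt (1 + ρ * h₁) * (Real.sqrt (1 + ρ * h₁) - 1) / (ρ * h₁)) * h₁)) >
      (1/2) * Real.logb 2 (1 + ρ * h₂) := by
  set s := Real.sqrt (1 + ρ * h₁) with hs
  have hρh1 : 0 < ρ * h₁ := mul_pos hρ h1
  have hρh2 : 0 < ρ * h₂ := mul_pos hρ (h1.trans h12)
  have hs2 : s ^ 2 = 1 + ρ * h₁ := Real.sq_sqrt (by linarith)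
  have hs1 : 1 < s := by
    have := Real.lt_sqrt (x := 1) (y := 1 + ρ * h₁) (by norm_num)
    rw [← hs] at this
    exact this.mpr (by nlinarith)
  set t := Real.sqrt (1 + ρ * h₂) with ht
  have ht2 : t ^ 2 = 1 + ρ * h₂ := Real.sq_sqrt (by linarith)
  have hts : s < t := by
    apply Real.sqrt_lt_sqrt (by linarith)
    nlinarith
  have ht1 : 1 < t := hs1.trans hts
  -- simplify the argument
  have harg : 1 + ρ * (s * (s - 1) / (ρ * h₁)) * h₂ /
        (1 + ρ * (1 - s * (s - 1) / (ρ * h₁)) * h₁) = 1 + ρ * h₂ / (s + 1) := by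
    have hden : 1 + ρ * (1 - s * (s - 1) / (ρ * h₁)) * h₁ = s := by
      field_simp
      nlinarith
    rw [hden]
    have hsne : s ≠ 0 := by positivity
    have : ρ * h₁ = (s - 1) * (s + 1) := by nlinarith
    rw [this]
    have h1 : s - 1 ≠ 0 := by nlinarith
    have h2 : s + 1 ≠ 0 := by positivity
    field_simp
  rw [harg]
  have hrhs : (1/2) * Real.logb 2 (1 + ρ * h₂) = Real.logb 2 t := by
    rw [ht, Real.logb, Real.logb, Real.log_sqrt (by linarith)]
    ring
  rw [hrhs]
  apply Real.logb_lt_logb (by norm_num) (by positivity)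
  have : t * (s + 1) < s + t ^ 2 := by nlinarith [mul_pos (sub_pos.mpr ht1) (sub_pos.mpr hts)]
  rw [show (1 : ℝ) + ρ * h₂ / (s + 1) = (s + t ^ 2) / (s + 1) by
    rw [ht2]; field_simp; ring]
  rw [lt_div_iff₀ (by linarith)]
  linarith
end
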